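/- Let u, w ∈ ℤ^n be primitive vectors whose images in (ℤ/3)^n satisfy [u] = ±[w] (i.e., u ≡ w or u ≡ −w mod 3), and suppose the segments [0,u] and [0,w] are not translates of each other (u ≠ ±w). Then either u + w or u − w is a nonzero vector divisible by 3; consequently the Minkowski sum [0,u] + [0,w] contains a lattice segment of lattice length 3, so L([0,u]+[0,w]) ≥ 3. -/

import Mathlib

open Pointwise

/-- The real point corresponding to a lattice point. -/
def coeV {n : ℕ} (v : Fin n → ℤ) : Fin n → ℝ := fun i => (v i : ℝ)

/-- A vector in `ℤ^n` is primitive if the gcd of its coordinates is `1`. -/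
def IsPrim {n : ℕ} (v : Fin n → ℤ) : Prop := Finset.univ.gcd v = 1

/-- The zonotope with base lattice point `A` obtained as the Minkowski sum of the
lattice segments `[0, v i]`. -/
def Zono {n L : ℕ} (A : Fin n → ℤ) (v : Fin L → Fin n → ℤ) : Set (Fin n → ℝ) :=
  ({coeV A} : Set (Fin n → ℝ)) + ∑ i, segment ℝ 0 (coeV (v i))

/-- `P` contains (a translate of) a Minkowski sum of `L` primitive lattice segments. -/
def IsDecomp {n : ℕ} (P : Set (Fin n → ℝ)) (L : ℕ) : Prop :=
  ∃ (A : Fin n → ℤ) (v : Fin L → Fin n → ℤ), (∀ i, IsPrim (v i)) ∧ Zono A v ⊆ P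

/-- `L` is the Minkowski length of `P`. -/
def MinkLen {n : ℕ} (P : Set (Fin n → ℝ)) (L : ℕ) : Prop :=
  IsDecomp P L ∧ ∀ M, IsDecomp P M → M ≤ L

/-- `P` is a lattice polytope: the convex hull of a nonempty finite set of lattice points. -/
def IsLatticePolytope {n : ℕ} (P : Set (Fin n → ℝ)) : Prop :=
  ∃ S : Finset (Fin n → ℤ), S.Nonempty ∧ P = convexHull ℝ (coeV '' ↑S)

/-- `Zono A v` is a smallest maximal Minkowski decomposition in `P`: it realizes the
Minkowski length of `P` and is minimal with respect to inclusion among all maximal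
decompositions in `P`. -/
def IsSmallestMax {n L : ℕ} (P : Set (Fin n → ℝ)) (A : Fin n → ℤ)
    (v : Fin L → Fin n → ℤ) : Prop :=
  (∀ i, IsPrim (v i)) ∧ Zono A v ⊆ P ∧ MinkLen P L ∧
    ∀ (B : Fin n → ℤ) (w : Fin L → Fin n → ℤ), (∀ i, IsPrim (w i)) →
      Zono B w ⊆ P → Zono B w ⊆ Zono A v → Zono B w = Zono A v

/-!
If `u ≡ ±w (mod 3)` and `u ≠ ±w`, then `c = u ∓ w` is a nonzero lattice vector divisible by 3,
so `c = g • z` with `z` primitive and `3 ∣ g`. Up to translation, `[0, c]` is a diagonal of the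
parallelogram `[0, u] + [0, w]`, hence so is its subsegment `[0, 3 • z]`, which is the Minkowski
sum of three copies of the primitive segment `[0, z]`.
-/

section Segment

variable {𝕜 E : Type*} [Field 𝕜] [LinearOrder 𝕜] [IsStrictOrderedRing 𝕜]
  [AddCommGroup E] [Module 𝕜 E]

theorem segment_zero_smul (c : 𝕜) (x : E) : segment 𝕜 0 (c • x) = c • segment 𝕜 0 x := by
  simpa using (image_segment 𝕜 (DistribSMul.toLinearMap 𝕜 E c).toAffineMap 0 x).symm

theorem segment_zero_smul_add_segment_zero_smul (x : E) {a b : 𝕜} (ha : 0 ≤ a) (hb : 0 ≤ b) :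
    segment 𝕜 0 (a • x) + segment 𝕜 0 (b • x) = segment 𝕜 0 ((a + b) • x) := by
  simp only [segment_zero_smul, (convex_segment (0 : E) x).add_smul ha hb]

theorem segment_zero_smul_subset (x : E) {a b : 𝕜} (ha : 0 ≤ a) (hab : a ≤ b) :
    segment 𝕜 0 (a • x) ⊆ segment 𝕜 0 (b • x) :=
  calc segment 𝕜 0 (a • x) = segment 𝕜 0 (a • x) + {0} := (add_zero _).symm
    _ ⊆ segment 𝕜 0 (a • x) + segment 𝕜 0 ((b - a) • x) :=
        Set.add_subset_add_left (Set.singleton_subset_iff.2 (left_mem_segment 𝕜 0 _))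
    _ = segment 𝕜 0 (b • x) := by
        rw [segment_zero_smul_add_segment_zero_smul x ha (sub_nonneg.2 hab), add_sub_cancel]

theorem nsmul_segment_zero (k : ℕ) (x : E) : k • segment 𝕜 0 x = segment 𝕜 0 (k • x) := by
  induction k with
  | zero => simp [segment_same, Set.singleton_zero]
  | succ k ih =>
    have h := segment_zero_smul_add_segment_zero_smul x (k.cast_nonneg : (0 : 𝕜) ≤ k) zero_le_one
    rwa [one_smul, ← Nat.cast_succ, Nat.cast_smul_eq_nsmul, Nat.cast_smul_eq_nsmul, ← ih,
      ← succ_nsmul] at h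

theorem singleton_add_segment_zero (a c : E) : {a} + segment 𝕜 0 c = segment 𝕜 a (a + c) := by
  rw [Set.singleton_add, segment_translate_image, add_zero]

theorem singleton_add_segment_zero_subset {s : Set E} (hs : Convex 𝕜 s) {a c : E} (ha : a ∈ s)
    (hac : a + c ∈ s) : {a} + segment 𝕜 0 c ⊆ s := by
  rw [singleton_add_segment_zero]
  exact hs.segment_subset ha hac

end Segment

section Lattice

variable {n : ℕ}

@[simp] theorem coeV_add (u w : Fin n → ℤ) : coeV (u + w) = coeV u + coeV w := by
  ext; simp [coeV]

@[simp] theorem coeV_sub (u w : Fin n → ℤ) : coeV (u - w) = coeV u - coeV w := by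
  ext; simp [coeV]

@[simp] theorem coeV_zero : coeV (0 : Fin n → ℤ) = 0 := by
  ext; simp [coeV]

@[simp] theorem coeV_zsmul (k : ℤ) (v : Fin n → ℤ) : coeV (k • v) = (k : ℝ) • coeV v := by
  ext; simp [coeV]

@[simp] theorem coeV_nsmul (k : ℕ) (v : Fin n → ℤ) : coeV (k • v) = k • coeV v := by
  ext; simp [coeV]

theorem exists_isPrim_eq_gcd_smul {c : Fin n → ℤ} (hc : c ≠ 0) :
    ∃ z, IsPrim z ∧ c = Finset.univ.gcd c • z := by
  obtain ⟨i, hi⟩ := Function.ne_iff.1 hc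
  refine ⟨fun j => c j / Finset.univ.gcd c, Finset.gcd_div_eq_one (Finset.mem_univ i) hi, ?_⟩
  ext j
  exact (Int.mul_ediv_cancel' (Finset.gcd_dvd (Finset.mem_univ j))).symm

theorem zono_const (A z : Fin n → ℤ) (k : ℕ) :
    Zono A (fun _ : Fin k => z) = {coeV A} + segment ℝ 0 (coeV (k • z)) := by
  rw [Zono, Finset.sum_const, Finset.card_univ, Fintype.card_fin, nsmul_segment_zero, coeV_nsmul]

theorem isDecomp_of_singleton_add_segment_subset {P : Set (Fin n → ℝ)} {k : ℕ}
    (h : ∃ A z : Fin n → ℤ, IsPrim z ∧ {coeV A} + segment ℝ 0 (coeV (k • z)) ⊆ P) :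
    IsDecomp P k := by
  obtain ⟨A, z, hz, hP⟩ := h
  exact ⟨A, fun _ => z, fun _ => hz, (zono_const A z k).trans_subset hP⟩

theorem exists_isPrim_segment_subset {c : Fin n → ℤ} {k : ℕ} (hc : c ≠ 0)
    (hk : ∀ i, (k : ℤ) ∣ c i) :
    ∃ z, IsPrim z ∧ segment ℝ 0 (coeV (k • z)) ⊆ segment ℝ 0 (coeV c) := by
  obtain ⟨z, hz, hcz⟩ := exists_isPrim_eq_gcd_smul hc
  refine ⟨z, hz, ?_⟩
  have hg : 0 < Finset.univ.gcd c := by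
    obtain ⟨i, hi⟩ := Function.ne_iff.1 hc
    refine (Int.nonneg_of_normalize_eq_self Finset.normalize_gcd).lt_of_ne' ?_
    exact fun h => hi (Finset.gcd_eq_zero_iff.1 h i (Finset.mem_univ i))
  have hkg : (k : ℤ) ≤ Finset.univ.gcd c := Int.le_of_dvd hg (Finset.dvd_gcd fun i _ => hk i)
  rw [hcz, coeV_zsmul, coeV_nsmul, ← Nat.cast_smul_eq_nsmul ℝ]
  exact segment_zero_smul_subset _ k.cast_nonneg (by exact_mod_cast hkg)

end Lattice

theorem stmt10_general {n : ℕ} (u w : Fin n → ℤ)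
    (hclass : (∀ i, (u i - w i) % 3 = 0) ∨ (∀ i, (u i + w i) % 3 = 0))
    (h1 : u ≠ w) (h2 : u ≠ -w) :
    ((u + w ≠ 0 ∧ ∀ i, (3 : ℤ) ∣ (u i + w i)) ∨
      (u - w ≠ 0 ∧ ∀ i, (3 : ℤ) ∣ (u i - w i))) ∧
    (∃ (A z : Fin n → ℤ), IsPrim z ∧
      ({coeV A} : Set (Fin n → ℝ)) + segment ℝ 0 (coeV (3 • z)) ⊆
        segment ℝ 0 (coeV u) + segment ℝ 0 (coeV w)) ∧
    IsDecomp (segment ℝ 0 (coeV u) + segment ℝ 0 (coeV w)) 3 := by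
  have hdiv : (u + w ≠ 0 ∧ ∀ i, (3 : ℤ) ∣ (u i + w i)) ∨
      (u - w ≠ 0 ∧ ∀ i, (3 : ℤ) ∣ (u i - w i)) := by
    rcases hclass with h | h
    · exact .inr ⟨sub_ne_zero.2 h1, fun i => Int.dvd_of_emod_eq_zero (h i)⟩
    · exact .inl ⟨fun h0 => h2 (eq_neg_of_add_eq_zero_left h0),
        fun i => Int.dvd_of_emod_eq_zero (h i)⟩
  have hconv := (convex_segment (𝕜 := ℝ) 0 (coeV u)).add (convex_segment 0 (coeV w))
  have hu_zero := left_mem_segment ℝ 0 (coeV u)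
  have hu_end := right_mem_segment ℝ 0 (coeV u)
  have hw_zero := left_mem_segment ℝ 0 (coeV w)
  have hw_end := right_mem_segment ℝ 0 (coeV w)
  have hseg : ∃ (A z : Fin n → ℤ), IsPrim z ∧
      ({coeV A} : Set (Fin n → ℝ)) + segment ℝ 0 (coeV (3 • z)) ⊆
        segment ℝ 0 (coeV u) + segment ℝ 0 (coeV w) := by
    rcases hdiv with ⟨hc, h3⟩ | ⟨hc, h3⟩
    · obtain ⟨z, hz, hsub⟩ := exists_isPrim_segment_subset (k := 3) hc h3
      refine ⟨0, z, hz, (Set.add_subset_add_left hsub).trans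
        (singleton_add_segment_zero_subset hconv ?_ ?_)⟩
      · simpa using Set.add_mem_add hu_zero hw_zero
      · simpa using Set.add_mem_add hu_end hw_end
    · obtain ⟨z, hz, hsub⟩ := exists_isPrim_segment_subset (k := 3) hc h3
      refine ⟨w, z, hz, (Set.add_subset_add_left hsub).trans
        (singleton_add_segment_zero_subset hconv ?_ ?_)⟩
      · simpa using Set.add_mem_add hu_zero hw_end
      · simpa using Set.add_mem_add hu_end hw_zero
  exact ⟨hdiv, hseg, isDecomp_of_singleton_add_segment_subset hseg⟩

/-- If `u, w` are primitive, represent the same class in `ℤ₃ℙ^{n-1}` (i.e. `u ≡ ±w mod 3`),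
and `[0,u]`, `[0,w]` are not translates of each other, then `u + w` or `u - w` is a nonzero
vector divisible by 3, and `[0,u] + [0,w]` contains a translate of a lattice segment of
lattice length 3; hence `L([0,u] + [0,w]) ≥ 3`. -/
theorem stmt10 {n : ℕ} (u w : Fin n → ℤ) (hu : IsPrim u) (hw : IsPrim w)
    (hclass : (∀ i, (u i - w i) % 3 = 0) ∨ (∀ i, (u i + w i) % 3 = 0))
    (h1 : u ≠ w) (h2 : u ≠ -w) :
    ((u + w ≠ 0 ∧ ∀ i, (3 : ℤ) ∣ (u i + w i)) ∨
      (u - w ≠ 0 ∧ ∀ i, (3 : ℤ) ∣ (u i - w i))) ∧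
    (∃ (A z : Fin n → ℤ), IsPrim z ∧
      ({coeV A} : Set (Fin n → ℝ)) + segment ℝ 0 (coeV (3 • z)) ⊆
        segment ℝ 0 (coeV u) + segment ℝ 0 (coeV w)) ∧
    IsDecomp (segment ℝ 0 (coeV u) + segment ℝ 0 (coeV w)) 3 :=
  stmt10_general u w hclass h1 h2
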